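/- Let A_k be the anti-factorial tree: the balanced rooted tree with k levels in which every vertex on level j has exactly k-j children. Let He_j be the monic Hermite polynomials defined by He_0 = 1, He_1 = x, He_j = x·He_{j-1} - (j-1)·He_{j-2}. Then for k ≥ 1, the characteristic polynomial of the adjacency matrix of A_k equals He_k(x)·∏_{j=2}^{k-1} He_j(x)^{(j-1)(k-1)!/j!}. -/

import Mathlib

open Polynomial

/-- A rooted tree on the vertex set `Fin (n+1)`, encoded by a parent function:
the root is `0`, and every non-root vertex has a parent strictly smaller than
itself (which guarantees acyclicity and connectedness). -/
structure ParentTree (n : ℕ) where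
  parent : Fin (n + 1) → Fin (n + 1)
  parent_lt : ∀ i : Fin (n + 1), i ≠ 0 → parent i < i
  parent_zero : parent 0 = 0

namespace ParentTree

variable {n : ℕ}

/-- The set of children of a vertex. -/
def children (T : ParentTree n) (v : Fin (n + 1)) : Finset (Fin (n + 1)) :=
  Finset.univ.filter fun w => T.parent w = v ∧ w ≠ v

/-- The adjacency matrix of a rooted tree, with entries in `R`. -/
def adjMat (T : ParentTree n) (R : Type) [Zero R] [One R] :
    Matrix (Fin (n + 1)) (Fin (n + 1)) R :=
  Matrix.of fun i j => if i ≠ j ∧ (T.parent i = j ∨ T.parent j = i) then 1 else 0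

/-- The degree of a vertex. -/
def deg (T : ParentTree n) (v : Fin (n + 1)) : ℕ :=
  (T.children v).card + if v = 0 then 0 else 1

end ParentTree

/-- The monic (probabilists') Hermite polynomials:
`He 0 = 1`, `He 1 = X`, `He j = X·He (j-1) - (j-1)·He (j-2)`. -/
noncomputable def hermiteHe : ℕ → Polynomial ℚ
  | 0 => 1
  | 1 => Polynomial.X
  | (j + 2) => Polynomial.X * hermiteHe (j + 1) - Polynomial.C ((j : ℚ) + 1) * hermiteHe j

/-!
Let `P` be the parent-to-child incidence matrix of the tree, so that `A = P + Pᵀ`. If `f` is a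
nowhere-vanishing weight with `f v + ∑_{w child of v} 1 / f w = x` for every vertex, then the
unitriangular matrix `L = 1 - P · diag(1 / f)` gives the congruence `x - A = L · diag(f) · Lᵀ`,
so `det (x - A) = ∏ f v`.

In the anti-factorial tree a vertex of height `m = k - level` has `m` children, all of height
`m - 1`, so by the recurrence `He_{m+1} + m He_{m-1} = x He_m` the weight
`f v = He_{m+1} / He_m` works over `ℚ(x)`. There are `(k-1)!/m!` vertices of height `m`, and
the product `∏_{m<k} (He_{m+1} / He_m)^{(k-1)!/m!}` telescopes to the stated formula, since
`(k-1)!/(m-1)! - (k-1)!/m! = (m-1)(k-1)!/m!`.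
-/

open Finset Matrix Nat

theorem hermiteHe_monic_and_degree : ∀ m : ℕ, (hermiteHe m).Monic ∧ (hermiteHe m).degree = m
  | 0 => ⟨monic_one, degree_one⟩
  | 1 => ⟨monic_X, degree_X⟩
  | j + 2 => by
    obtain ⟨hmon, hdeg⟩ := hermiteHe_monic_and_degree (j + 1)
    have hlead : (X * hermiteHe (j + 1)).degree = ↑(j + 2) := by
      rw [degree_mul, degree_X, hdeg]
      norm_cast
      omega
    have hlow : (C ((j : ℚ) + 1) * hermiteHe j).degree < (X * hermiteHe (j + 1)).degree := by
      rw [degree_C_mul (by positivity), (hermiteHe_monic_and_degree j).2, hlead]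
      exact_mod_cast (by omega : j < j + 2)
    exact ⟨(monic_X.mul hmon).sub_of_left hlow,
      (degree_sub_eq_left_of_degree_lt hlow).trans hlead⟩

theorem hermiteHe_ne_zero (m : ℕ) : hermiteHe m ≠ 0 :=
  (hermiteHe_monic_and_degree m).1.ne_zero

theorem hermiteHe_succ_add_mul_pred (m : ℕ) :
    hermiteHe (m + 1) + (m : ℚ[X]) * hermiteHe (m - 1) = X * hermiteHe m := by
  cases m with
  | zero => simp [hermiteHe]
  | succ j =>
    rw [hermiteHe, Nat.add_sub_cancel, C_add, C_1, C_eq_natCast]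
    push_cast
    ring

theorem prod_range_div_pow_of_antitone {K : Type*} [Field K] (a : ℕ → K) (ha : ∀ m, a m ≠ 0)
    {c : ℕ → ℕ} (hc : Antitone c) (k : ℕ) :
    ∏ m ∈ range k, (a (m + 1) / a m) ^ c m =
      a k ^ c (k - 1) * (∏ m ∈ range k, a m ^ (c (m - 1) - c m)) / a 0 ^ c 0 := by
  have hshift : (∏ m ∈ range k, a (m + 1) ^ c m) * a 0 ^ c 0 =
      (∏ m ∈ range k, a m ^ c (m - 1)) * a k ^ c (k - 1) := by
    rw [← prod_range_succ (fun m => a m ^ c (m - 1)), prod_range_succ']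
    simp
  have hsplit : ∏ m ∈ range k, a m ^ c (m - 1) =
      (∏ m ∈ range k, a m ^ (c (m - 1) - c m)) * ∏ m ∈ range k, a m ^ c m := by
    rw [← prod_mul_distrib]
    refine prod_congr rfl fun m _ => ?_
    rw [← pow_add, Nat.sub_add_cancel (hc (Nat.sub_le m 1))]
  have hden : ∏ m ∈ range k, a m ^ c m ≠ 0 := prod_ne_zero_iff.2 fun m _ => pow_ne_zero _ (ha m)
  simp_rw [div_pow]
  rw [prod_div_distrib, div_eq_div_iff hden (pow_ne_zero _ (ha 0)), hshift, hsplit]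
  ring

theorem factorial_div_pred_sub_factorial_div {N m : ℕ} (hm : m ≤ N) :
    N ! / (m - 1)! - N ! / m ! = (m - 1) * N ! / m ! := by
  cases m with
  | zero => simp
  | succ t =>
    have hdvd := factorial_dvd_factorial hm
    have hpred : N ! / t ! = (t + 1) * (N ! / (t + 1)!) := by
      rw [← Nat.mul_div_assoc _ hdvd, factorial_succ, Nat.mul_div_mul_left _ _ t.succ_pos]
    rw [Nat.add_sub_cancel, hpred, Nat.mul_div_assoc _ hdvd]
    rw [Nat.add_mul, one_mul, Nat.add_sub_cancel]

theorem prod_range_pow_factorial_div_sub {M : Type*} [CommMonoid M] (a : ℕ → M) (k : ℕ) :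
    ∏ m ∈ range k, a m ^ ((k - 1)! / (m - 1)! - (k - 1)! / m !) =
      ∏ m ∈ Icc 2 (k - 1), a m ^ ((m - 1) * (k - 1)! / m !) := by
  rw [prod_congr rfl fun m hm =>
    by rw [factorial_div_pred_sub_factorial_div (by rw [mem_range] at hm; omega)]]
  symm
  refine prod_subset (fun m hm => by rw [mem_Icc] at hm; rw [mem_range]; omega) fun m hm hm' => ?_
  obtain rfl | rfl : m = 0 ∨ m = 1 := by rw [mem_range] at hm; rw [mem_Icc] at hm'; omega
  all_goals simp

theorem Matrix.algebraMap_charpoly_eq_det {R K ι : Type*} [CommRing R] [CommRing K] [Fintype ι]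
    [DecidableEq ι] [Algebra R K] [Algebra R[X] K] [IsScalarTower R R[X] K] (M : Matrix ι ι R) :
    algebraMap R[X] K M.charpoly = (scalar ι (algebraMap R[X] K X) - M.map (algebraMap R K)).det := by
  rw [← eval_charpoly, charpoly_map, eval_map_algebraMap, aeval_algebraMap_apply, aeval_X_left_apply]

namespace ParentTree

variable {n : ℕ} (T : ParentTree n)

@[simp]
theorem mem_children {v w : Fin (n + 1)} : w ∈ T.children v ↔ T.parent w = v ∧ w ≠ v := by
  simp [children]

theorem ne_zero_of_mem_children {v w : Fin (n + 1)} (h : w ∈ T.children v) : w ≠ 0 := by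
  rintro rfl
  rw [mem_children, T.parent_zero] at h
  exact h.2 h.1

theorem lt_of_mem_children {v w : Fin (n + 1)} (h : w ∈ T.children v) : v < w :=
  (T.mem_children.1 h).1 ▸ T.parent_lt w (T.ne_zero_of_mem_children h)

theorem pairwiseDisjoint_children (s : Set (Fin (n + 1))) : s.PairwiseDisjoint T.children := by
  intro u _ u' _ hne
  rw [Function.onFun, Finset.disjoint_left]
  intro w hw hw'
  exact hne ((T.mem_children.1 hw).1.symm.trans (T.mem_children.1 hw').1)

theorem adjMat_map {R S : Type} [Zero R] [One R] [Zero S] [One S] {F : Type*} [FunLike F R S]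
    [ZeroHomClass F R S] [OneHomClass F R S] (f : F) : (T.adjMat R).map f = T.adjMat S := by
  ext i j
  simp only [adjMat, map_apply, of_apply]
  split_ifs <;> simp

def childMat (R : Type*) [Zero R] [One R] : Matrix (Fin (n + 1)) (Fin (n + 1)) R :=
  Matrix.of fun v w => if w ∈ T.children v then 1 else 0

theorem adjMat_eq_childMat_add_transpose (R : Type) [AddZeroClass R] [One R] :
    T.adjMat R = T.childMat R + (T.childMat R)ᵀ := by
  ext i j
  have hasymm : ¬(j ∈ T.children i ∧ i ∈ T.children j) := fun h =>
    (T.lt_of_mem_children h.1).not_gt (T.lt_of_mem_children h.2)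
  have hadj : (i ≠ j ∧ (T.parent i = j ∨ T.parent j = i)) ↔
      (j ∈ T.children i ∨ i ∈ T.children j) := by
    simp only [mem_children]
    grind
  simp only [adjMat, childMat, Matrix.add_apply, transpose_apply, of_apply, hadj]
  split_ifs <;> simp_all

theorem childMat_mul_diagonal_mul_transpose {R : Type*} [NonAssocSemiring R]
    (g : Fin (n + 1) → R) :
    T.childMat R * diagonal g * (T.childMat R)ᵀ =
      diagonal fun v => ∑ w ∈ T.children v, g w := by
  ext u v
  have hboth : ∀ w, (w ∈ T.children u ∧ w ∈ T.children v) ↔ (u = v ∧ w ∈ T.children u) := by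
    simp only [mem_children]
    grind
  rw [mul_apply]
  simp only [mul_diagonal, transpose_apply, childMat, of_apply, diagonal_apply, ite_mul, one_mul,
    zero_mul, mul_ite, mul_one, mul_zero, ← ite_and, and_comm (a := _ ∈ T.children v), hboth]
  split_ifs with huv
  · simp only [huv, true_and, ← sum_filter, filter_univ_mem]
  · simp [huv]

theorem det_one_sub_childMat_mul_diagonal {R : Type*} [CommRing R] (g : Fin (n + 1) → R) :
    (1 - T.childMat R * diagonal g).det = 1 := by
  rw [det_of_isUpperTriangular]
  · simp [childMat]
  · intro i j (hji : j < i)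
    have : j ∉ T.children i := fun h => (T.lt_of_mem_children h).not_gt hji
    simp only [childMat, Matrix.sub_apply, one_apply_ne hji.ne', mul_diagonal, of_apply, if_neg this,
      zero_mul, sub_zero]

theorem det_scalar_sub_adjMat_eq_prod {K : Type} [Field K] (x : K) (f : Fin (n + 1) → K)
    (hf0 : ∀ v, f v ≠ 0) (hf : ∀ v, f v + ∑ w ∈ T.children v, (f w)⁻¹ = x) :
    (scalar (Fin (n + 1)) x - T.adjMat K).det = ∏ v, f v := by
  set P := T.childMat K
  set G := diagonal fun v => (f v)⁻¹
  set D := diagonal f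
  have hGD : G * D = 1 := by
    rw [diagonal_mul_diagonal]; simp [hf0]
  have hDG : ∀ M : Matrix _ _ K, D * (G * M) = M := fun M => by
    rw [← Matrix.mul_assoc, diagonal_mul_diagonal]; simp [hf0]
  have hGt : Gᵀ = G := diagonal_transpose _
  have hdiag : D + P * G * Pᵀ = scalar _ x := by
    rw [T.childMat_mul_diagonal_mul_transpose, diagonal_add]
    ext i j
    simp [diagonal_apply, hf]
  have hLDL : (1 - P * G) * D * (1 - P * G)ᵀ = scalar _ x - T.adjMat K := by
    rw [transpose_sub, transpose_one, transpose_mul, hGt, T.adjMat_eq_childMat_add_transpose,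
      ← hdiag]
    simp only [sub_mul, mul_sub, one_mul, mul_one, Matrix.mul_assoc, hGD, hDG]
    abel
  rw [← hLDL, det_mul, det_mul, det_transpose, T.det_one_sub_childMat_mul_diagonal, det_diagonal,
    one_mul, mul_one]

theorem det_scalar_sub_adjMat_eq_prod_of_height {K : Type} [Field K] (x : K) (a : ℕ → K)
    (ha : ∀ m, a m ≠ 0) (hrec : ∀ m, a (m + 1) + m * a (m - 1) = x * a m) (h : Fin (n + 1) → ℕ)
    (hcard : ∀ v, #(T.children v) = h v) (hchild : ∀ v, ∀ w ∈ T.children v, h w + 1 = h v) :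
    (scalar (Fin (n + 1)) x - T.adjMat K).det = ∏ v, a (h v + 1) / a (h v) := by
  refine T.det_scalar_sub_adjMat_eq_prod x _ (fun v => div_ne_zero (ha _) (ha _)) fun v => ?_
  have hterm : ∀ w ∈ T.children v, (a (h w + 1) / a (h w))⁻¹ = a (h v - 1) / a (h v) :=
    fun w hw => by rw [inv_div, ← hchild v w hw, Nat.add_sub_cancel]
  rw [sum_congr rfl hterm, sum_const, hcard, nsmul_eq_mul, ← mul_div_assoc, ← add_div,
    hrec, mul_div_assoc, div_self (ha _), mul_one]

section Levels

variable {lvl : Fin (n + 1) → ℕ}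

theorem one_le_lvl (hlvl0 : lvl 0 = 1) (hlvl : ∀ v, v ≠ 0 → lvl v = lvl (T.parent v) + 1)
    (v : Fin (n + 1)) : 1 ≤ lvl v := by
  by_cases hv : v = 0
  · rw [hv, hlvl0]
  · rw [hlvl v hv]
    omega

theorem lvl_of_mem_children (hlvl : ∀ v, v ≠ 0 → lvl v = lvl (T.parent v) + 1)
    {v w : Fin (n + 1)} (hw : w ∈ T.children v) : lvl w = lvl v + 1 := by
  rw [hlvl w (T.ne_zero_of_mem_children hw), (T.mem_children.1 hw).1]

theorem filter_lvl_eq_one (hlvl0 : lvl 0 = 1) (hlvl : ∀ v, v ≠ 0 → lvl v = lvl (T.parent v) + 1) :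
    univ.filter (fun v => lvl v = 1) = {0} := by
  ext v
  simp only [mem_filter, mem_univ, true_and, mem_singleton]
  refine ⟨fun hv => ?_, fun hv => hv ▸ hlvl0⟩
  by_contra hv0
  have := T.one_le_lvl hlvl0 hlvl (T.parent v)
  have := hlvl v hv0
  omega

theorem filter_lvl_eq_succ (hlvl0 : lvl 0 = 1) (hlvl : ∀ v, v ≠ 0 → lvl v = lvl (T.parent v) + 1)
    {j : ℕ} (hj : j ≠ 0) :
    univ.filter (fun v => lvl v = j + 1) =
      (univ.filter fun v => lvl v = j).biUnion T.children := by
  ext w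
  simp only [mem_filter, mem_univ, true_and, mem_biUnion]
  constructor
  · intro hw
    have hw0 : w ≠ 0 := by
      rintro rfl
      omega
    refine ⟨T.parent w, by have := hlvl w hw0; omega, T.mem_children.2 ⟨rfl, (T.parent_lt w hw0).ne'⟩⟩
  · rintro ⟨v, hv, hw⟩
    rw [T.lvl_of_mem_children hlvl hw, hv]

theorem card_filter_lvl_mul_factorial (hlvl0 : lvl 0 = 1)
    (hlvl : ∀ v, v ≠ 0 → lvl v = lvl (T.parent v) + 1) {k : ℕ}
    (hanti : ∀ v, #(T.children v) = k - lvl v) {j : ℕ} (hj : 1 ≤ j) (hjk : j ≤ k) :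
    #{v | lvl v = j} * (k - j)! = (k - 1)! := by
  induction j, hj using Nat.le_induction with
  | base => rw [T.filter_lvl_eq_one hlvl0 hlvl, card_singleton, one_mul]
  | succ j hj ih =>
    rw [T.filter_lvl_eq_succ hlvl0 hlvl (by omega), card_biUnion (T.pairwiseDisjoint_children _),
      sum_congr rfl fun v hv => by rw [hanti, (mem_filter.1 hv).2], sum_const, smul_eq_mul,
      ← ih (by omega), show k - j = k - (j + 1) + 1 by omega, factorial_succ]
    ring

theorem card_filter_sub_lvl_eq (hlvl0 : lvl 0 = 1)
    (hlvl : ∀ v, v ≠ 0 → lvl v = lvl (T.parent v) + 1) {k : ℕ} (hle : ∀ v, lvl v ≤ k)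
    (hanti : ∀ v, #(T.children v) = k - lvl v) {m : ℕ} (hm : m < k) :
    #{v | k - lvl v = m} = (k - 1)! / m ! := by
  have hlevel : univ.filter (fun v => k - lvl v = m) = univ.filter fun v => lvl v = k - m := by
    ext v
    have := hle v
    have := T.one_le_lvl hlvl0 hlvl v
    simp only [mem_filter, mem_univ, true_and]
    omega
  rw [hlevel, ← T.card_filter_lvl_mul_factorial hlvl0 hlvl hanti (j := k - m) (by omega)
    (Nat.sub_le k m), Nat.sub_sub_self hm.le, Nat.mul_div_cancel _ (factorial_pos m)]

end Levels

end ParentTree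

theorem stmt_16 {n : ℕ} (T : ParentTree n)
    (lvl : Fin (n + 1) → ℕ)
    (hlvl0 : lvl 0 = 1)
    (hlvl : ∀ v, v ≠ 0 → lvl v = lvl (T.parent v) + 1)
    (k : ℕ) (hk : 1 ≤ k)
    (hle : ∀ v, lvl v ≤ k)
    (hanti : ∀ v, (T.children v).card = k - lvl v) :
    (T.adjMat ℚ).charpoly =
      hermiteHe k *
        ∏ j ∈ Finset.Icc 2 (k - 1),
          hermiteHe j ^ ((j - 1) * Nat.factorial (k - 1) / Nat.factorial j) := by
  have hheight : ∀ v, ∀ w ∈ T.children v, k - lvl w + 1 = k - lvl v := fun v w hw => by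
    have := T.lvl_of_mem_children hlvl hw
    have := hle w
    omega
  let a : ℕ → RatFunc ℚ := fun m => algebraMap ℚ[X] (RatFunc ℚ) (hermiteHe m)
  have ha : ∀ m, a m ≠ 0 := fun m =>
    (map_ne_zero_iff _ (IsFractionRing.injective ℚ[X] (RatFunc ℚ))).2 (hermiteHe_ne_zero m)
  have hrec : ∀ m, a (m + 1) + m * a (m - 1) = algebraMap ℚ[X] (RatFunc ℚ) X * a m := fun m => by
    simpa using congrArg (algebraMap ℚ[X] (RatFunc ℚ)) (hermiteHe_succ_add_mul_pred m)
  have hc : Antitone fun m => (k - 1)! / m ! := fun _ _ h =>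
    Nat.div_le_div_left (factorial_le h) (factorial_pos _)
  apply IsFractionRing.injective ℚ[X] (RatFunc ℚ)
  rw [Matrix.algebraMap_charpoly_eq_det, T.adjMat_map,
    T.det_scalar_sub_adjMat_eq_prod_of_height _ a ha hrec _ hanti hheight,
    ← prod_fiberwise_of_maps_to' (t := range k) (g := fun v => k - lvl v)
      (f := fun m => a (m + 1) / a m)
      (fun v _ => mem_range.2 (by have := T.one_le_lvl hlvl0 hlvl v; omega)),
    prod_congr rfl fun m hm => by
      rw [prod_const, T.card_filter_sub_lvl_eq hlvl0 hlvl hle hanti (mem_range.1 hm)],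
    prod_range_div_pow_of_antitone a ha hc, prod_range_pow_factorial_div_sub]
  simp [a, map_prod, Nat.div_self (factorial_pos _), hermiteHe.eq_1]
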